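/- arXiv:2006.10312 — 2 statements merged into one kernel-verified Lean document; each statement's English description precedes it below -/
import Mathlib

section
/- Let G be the group with presentation ⟨a, b | a b^{-(n-1)} a b^{-1} a b = b a b^{-1} a b^{-(n-1)} a⟩ for an integer n. Then in G the relation [a, b a^{-1} b^{n-1} a^{-1} b] = 1 holds, i.e., a commutes with b a^{-1} b^{n-1} a^{-1} b. -/
/-- The single relator of ⟨a, b | a b^{-(n-1)} a b⁻¹ a b = b a b⁻¹ a b^{-(n-1)} a⟩,
where `a = FreeGroup.of 0`, `b = FreeGroup.of 1`. -/
def pretzelRels (n : ℤ) : Set (FreeGroup (Fin 2)) :=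
  { (FreeGroup.of 0 * (FreeGroup.of 1) ^ (-(n - 1)) * FreeGroup.of 0 * (FreeGroup.of 1)⁻¹ *
      FreeGroup.of 0 * FreeGroup.of 1) *
    (FreeGroup.of 1 * FreeGroup.of 0 * (FreeGroup.of 1)⁻¹ * FreeGroup.of 0 *
      (FreeGroup.of 1) ^ (-(n - 1)) * FreeGroup.of 0)⁻¹ }

/-- In G = ⟨a, b | a b^{-(n-1)} a b⁻¹ a b = b a b⁻¹ a b^{-(n-1)} a⟩,
the relation [a, b a⁻¹ b^{n-1} a⁻¹ b] = 1 holds, i.e. a commutes with b a⁻¹ b^{n-1} a⁻¹ b. -/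
theorem pretzel_commutes (n : ℤ) :
    let a : PresentedGroup (pretzelRels n) := PresentedGroup.of 0
    let b : PresentedGroup (pretzelRels n) := PresentedGroup.of 1
    a⁻¹ * (b * a⁻¹ * b ^ (n - 1) * a⁻¹ * b)⁻¹ * a * (b * a⁻¹ * b ^ (n - 1) * a⁻¹ * b) = 1 := by
  intro a b
  set r : FreeGroup (Fin 2) :=
    (FreeGroup.of 0 * (FreeGroup.of 1) ^ (-(n - 1)) * FreeGroup.of 0 * (FreeGroup.of 1)⁻¹ *
      FreeGroup.of 0 * FreeGroup.of 1) *
    (FreeGroup.of 1 * FreeGroup.of 0 * (FreeGroup.of 1)⁻¹ * FreeGroup.of 0 *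
      (FreeGroup.of 1) ^ (-(n - 1)) * FreeGroup.of 0)⁻¹ with hr
  have hmem : r ∈ pretzelRels n := rfl
  have h1 : PresentedGroup.mk (pretzelRels n) r = 1 :=
    (QuotientGroup.eq_one_iff r).mpr (Subgroup.subset_normalClosure hmem)
  rw [hr] at h1
  have ha : (PresentedGroup.mk (pretzelRels n)) (FreeGroup.of 0) = a := rfl
  have hb : (PresentedGroup.mk (pretzelRels n)) (FreeGroup.of 1) = b := rfl
  simp only [map_mul, map_inv, map_zpow, ha, hb, zpow_neg] at h1
  set c : PresentedGroup (pretzelRels n) := b ^ (n - 1) with hc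
  have h : (a * c⁻¹ * a * b⁻¹ * a * b) * (b * a * b⁻¹ * a * c⁻¹ * a)⁻¹ = 1 := h1
  have this' : a * c⁻¹ * a * b⁻¹ * a * b = b * a * b⁻¹ * a * c⁻¹ * a := by
    have := mul_eq_one_iff_eq_inv.mp h
    rwa [inv_inv] at this
  have hq : (a * c⁻¹ * a) * (b⁻¹ * a * b) = (b * a * b⁻¹) * (a * c⁻¹ * a) := by
    calc (a * c⁻¹ * a) * (b⁻¹ * a * b)
        = a * c⁻¹ * a * b⁻¹ * a * b := by group
      _ = b * a * b⁻¹ * a * c⁻¹ * a := this'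
      _ = (b * a * b⁻¹) * (a * c⁻¹ * a) := by group
  calc a⁻¹ * (b * a⁻¹ * c * a⁻¹ * b)⁻¹ * a * (b * a⁻¹ * c * a⁻¹ * b)
      = a⁻¹ * b⁻¹ * ((a * c⁻¹ * a) * (b⁻¹ * a * b)) * (a * c⁻¹ * a)⁻¹ * b := by group
    _ = a⁻¹ * b⁻¹ * ((b * a * b⁻¹) * (a * c⁻¹ * a)) * (a * c⁻¹ * a)⁻¹ * b := by rw [hq]
    _ = 1 := by group
end

section
/- Let G be the group with presentation ⟨a, b | a b^{-(n-1)} a b^{-1} a b = b a b^{-1} a b^{-(n-1)} a⟩ where n ≥ 1. If [a, b] ≠ 1 in G, then [a, b] is a generalized torsion element of G: some non-empty finite product of conjugates of [a, b] equals the identity. -/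
/-- A generalized torsion element: a non-identity element some non-empty finite
product of whose conjugates is the identity. -/
def IsGenTorsion {G : Type*} [Group G] (g : G) : Prop :=
  g ≠ 1 ∧ ∃ l : List G, l ≠ [] ∧ (∀ x ∈ l, ∃ v : G, x = v⁻¹ * g * v) ∧ l.prod = 1

section abstractKey

variable {G : Type*} [Group G]

private lemma conj_prod (a : G) : ∀ l : List G,
    (l.map (fun x => a * x * a⁻¹)).prod = a * l.prod * a⁻¹ := by
  intro l
  induction l with
  | nil => simp
  | cons x xs ih => rw [List.map_cons, List.prod_cons, List.prod_cons, ih]; group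

lemma key_genTorsion_prod (a b : G) (m : ℕ)
    (hrel : a * (b ^ m)⁻¹ * a * b⁻¹ * a * b = b * a * b⁻¹ * a * (b ^ m)⁻¹ * a) :
    ∃ l : List G, l ≠ [] ∧
      (∀ x ∈ l, ∃ v : G, x = v⁻¹ * (a⁻¹ * b⁻¹ * a * b) * v) ∧ l.prod = 1 := by
  set c : G := a⁻¹ * b⁻¹ * a * b with hc
  set A : ℕ → G := fun k => (b ^ k)⁻¹ * a * b ^ k with hA
  set Ck : ℕ → G := fun k => (b ^ k)⁻¹ * c * b ^ k with hCk
  have step1 : ∀ k, A k * Ck k = A (k + 1) := by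
    intro k
    simp only [hA, hCk, hc, pow_succ]
    group
  have step2 : ∀ k, ((List.range k).map Ck).prod = a⁻¹ * A k := by
    intro k
    induction k with
    | zero => simp [hA]
    | succ k ih =>
        rw [List.range_succ, List.map_append, List.prod_append, ih]
        simp [← step1 k, mul_assoc]
  have h3 : a * A m * A (m + 1) = b * a * b⁻¹ * (a * A m) := by
    have e1 : a * A m * A (m + 1) = a * (b ^ m)⁻¹ * a * b⁻¹ * a * b * b ^ m := by
      simp only [hA, pow_succ]; group
    rw [e1, hrel]
    simp only [hA]; group
  have step4 : Ck m = (A m)⁻¹ * (A m)⁻¹ * (a⁻¹ * b * a * b⁻¹) * a * A m := by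
    have : Ck m = (A m)⁻¹ * A (m + 1) := by rw [← step1 m]; group
    rw [this]
    have h4 : A (m + 1) = (a * A m)⁻¹ * (a * A m * A (m + 1)) := by group
    rw [h3] at h4
    rw [h4]; group
  refine ⟨(b * c * b⁻¹) :: ((A m) ^ 2 * Ck m * ((A m) ^ 2)⁻¹) ::
      (List.range m).map (fun k => a * Ck k * a⁻¹), by simp, ?_, ?_⟩
  · intro x hx
    simp only [List.mem_cons, List.mem_map, List.mem_range] at hx
    rcases hx with rfl | rfl | ⟨k, _, rfl⟩
    · exact ⟨b⁻¹, by group⟩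
    · exact ⟨b ^ m * ((A m) ^ 2)⁻¹, by simp only [hCk]; group⟩
    · exact ⟨b ^ k * a⁻¹, by simp only [hCk]; group⟩
  · have hmap : ((List.range m).map (fun k => a * Ck k * a⁻¹)).prod
        = a * ((List.range m).map Ck).prod * a⁻¹ := by
      rw [show (fun k => a * Ck k * a⁻¹) = (fun x => a * x * a⁻¹) ∘ Ck from rfl,
        ← List.map_map, conj_prod]
    rw [List.prod_cons, List.prod_cons, hmap, step2, step4]
    generalize A m = x
    simp only [hc]
    group

end abstractKey

/-- In G = ⟨a, b | a b^{-(n-1)} a b⁻¹ a b = b a b⁻¹ a b^{-(n-1)} a⟩ with n ≥ 1,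
if [a,b] ≠ 1 then [a,b] is a generalized torsion element. -/
theorem pretzel_genTorsion (n : ℤ) (hn : 1 ≤ n)
    (h : (PresentedGroup.of 0 : PresentedGroup (pretzelRels n))⁻¹ *
        (PresentedGroup.of 1)⁻¹ * PresentedGroup.of 0 * PresentedGroup.of 1 ≠ 1) :
    IsGenTorsion ((PresentedGroup.of 0 : PresentedGroup (pretzelRels n))⁻¹ *
        (PresentedGroup.of 1)⁻¹ * PresentedGroup.of 0 * PresentedGroup.of 1) := by
  refine ⟨h, ?_⟩
  set A := (PresentedGroup.of 0 : PresentedGroup (pretzelRels n)) with hA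
  set B := (PresentedGroup.of 1 : PresentedGroup (pretzelRels n)) with hB
  set m : ℕ := (n - 1).toNat with hm
  have hrel1 : PresentedGroup.mk (pretzelRels n)
      ((FreeGroup.of 0 * (FreeGroup.of 1) ^ (-(n - 1)) * FreeGroup.of 0 * (FreeGroup.of 1)⁻¹ *
        FreeGroup.of 0 * FreeGroup.of 1) *
      (FreeGroup.of 1 * FreeGroup.of 0 * (FreeGroup.of 1)⁻¹ * FreeGroup.of 0 *
        (FreeGroup.of 1) ^ (-(n - 1)) * FreeGroup.of 0)⁻¹) = 1 := by
    apply (QuotientGroup.eq_one_iff _).mpr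
    exact Subgroup.subset_normalClosure rfl
  simp only [map_mul, map_inv, map_zpow] at hrel1
  have hof0 : PresentedGroup.mk (pretzelRels n) (FreeGroup.of 0) = A := rfl
  have hof1 : PresentedGroup.mk (pretzelRels n) (FreeGroup.of 1) = B := rfl
  rw [hof0, hof1] at hrel1
  have hz : B ^ (-(n - 1)) = (B ^ m)⁻¹ := by
    have : -(n - 1) = -((m : ℤ)) := by omega
    rw [this, zpow_neg, zpow_natCast]
  rw [hz, mul_inv_eq_one] at hrel1
  exact key_genTorsion_prod A B m hrel1
end
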